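/- In the Lie algebra of vector fields on ℝ⁴, the elements E = x₁∂₁ + x₂∂₂ + 2x₃∂₃ + 3x₄∂₄ and H = x₁∂₁ − x₂∂₂ + x₄∂₄ commute, and [E, X_n] = n·X_n, [H, X_n] = (n+2)·X_n for all n ≥ −1, where X_n = x₁^{n+1}∂₂ + x₁^{n+2}/(n+2)·∂₃ + x₁^{n+3}/(n+3)·∂₄. -/

import Mathlib

abbrev Pt : Type := Fin 4 → ℝ
abbrev VF : Type := Pt → Pt

/-- Lie bracket of vector fields on ℝ⁴: `[X,Y] = DY·X − DX·Y`. -/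
noncomputable def vb (X Y : VF) : VF :=
  fun p => fderiv ℝ Y p (X p) - fderiv ℝ X p (Y p)

/-- E = x₁∂₁ + x₂∂₂ + 2x₃∂₃ + 3x₄∂₄. -/
noncomputable def Efld : VF := fun p => ![p 0, p 1, 2 * p 2, 3 * p 3]
/-- H = x₁∂₁ − x₂∂₂ + x₄∂₄. -/
noncomputable def Hfld : VF := fun p => ![p 0, -p 1, 0, p 3]

/-- `Xf k` is the field X_{k−1} = x₁^k ∂₂ + x₁^{k+1}/(k+1) ∂₃ + x₁^{k+2}/(k+2) ∂₄,
so `Xf k` for `k : ℕ` runs through the fields X_n of the paper, n = k − 1 ≥ −1. -/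
noncomputable def Xf (k : ℕ) : VF :=
  fun p => ![0, p 0 ^ k, p 0 ^ (k + 1) / (k + 1), p 0 ^ (k + 2) / (k + 2)]

noncomputable def diagCLM (d : Fin 4 → ℝ) : Pt →L[ℝ] Pt :=
  ContinuousLinearMap.pi fun i => d i • ContinuousLinearMap.proj i

noncomputable def Xd (c : Fin 4 → ℝ) : Pt →L[ℝ] Pt :=
  ContinuousLinearMap.pi fun i => c i • (ContinuousLinearMap.proj 0 : Pt →L[ℝ] ℝ)

lemma hasFDerivAt_diag (d : Fin 4 → ℝ) (p : Pt) :
    HasFDerivAt (fun q : Pt => (fun i => d i * q i : Pt)) (diagCLM d) p := by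
  apply hasFDerivAt_pi''
  intro i
  exact (hasFDerivAt_apply (𝕜 := ℝ) i p).const_mul (d i)

lemma hasFDerivAt_Efld (p : Pt) :
    HasFDerivAt Efld (diagCLM ![1, 1, 2, 3]) p := by
  have h := hasFDerivAt_diag ![1, 1, 2, 3] p
  convert h using 2 with q
  funext i
  fin_cases i <;> simp [Efld]

lemma hasFDerivAt_Hfld (p : Pt) :
    HasFDerivAt Hfld (diagCLM ![1, -1, 0, 1]) p := by
  have h := hasFDerivAt_diag ![1, -1, 0, 1] p
  convert h using 2 with q
  funext i
  fin_cases i <;> simp [Hfld]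

lemma mul_pow_pred (k : ℕ) (x : ℝ) : (k:ℝ) * x * x ^ (k - 1) = k * x ^ k := by
  cases k with
  | zero => simp
  | succ n => rw [Nat.add_sub_cancel, pow_succ]; ring

lemma mul_pow_pred' (k : ℕ) (x : ℝ) : (k:ℝ) * x ^ (k - 1) * x = k * x ^ k := by
  rw [mul_comm ((k:ℝ) * x ^ (k-1)) x, ← mul_assoc, mul_comm x (k:ℝ), mul_pow_pred]

lemma hasFDerivAt_Xf (k : ℕ) (p : Pt) :
    HasFDerivAt (Xf k)
      (Xd ![0, k * p 0 ^ (k - 1), p 0 ^ k, p 0 ^ (k + 1)]) p := by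
  have hp : HasFDerivAt (fun f : Pt => f 0)
      (ContinuousLinearMap.proj 0 : Pt →L[ℝ] ℝ) p := hasFDerivAt_apply 0 p
  have h1 : ((k:ℝ)+1) ≠ 0 := by positivity
  have h2 : ((k:ℝ)+2) ≠ 0 := by positivity
  apply hasFDerivAt_pi''
  intro i
  fin_cases i
  · exact (hasFDerivAt_const (0:ℝ) p).congr_fderiv (by ext v; simp [Xd])
  · exact ((hasDerivAt_pow k (p 0)).comp_hasFDerivAt p hp).congr_fderiv
      (by ext v; simp [Xd]; try ring)
  · refine (((hasDerivAt_pow (k+1) (p 0)).div_const ((k:ℝ)+1)).comp_hasFDerivAt p hp).congr_fderiv ?_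
    ext v; simp [Xd]; try field_simp; try ring
    simp
  · refine (((hasDerivAt_pow (k+2) (p 0)).div_const ((k:ℝ)+2)).comp_hasFDerivAt p hp).congr_fderiv ?_
    ext v; simp [Xd]; try field_simp; try ring
    simp


/-- E and H commute, [E, X_n] = n X_n and [H, X_n] = (n+2) X_n for all n ≥ −1
(with n = k − 1). -/
theorem E_H_and_X_brackets :
    vb Efld Hfld = 0 ∧
    (∀ k : ℕ, vb Efld (Xf k) = ((k : ℝ) - 1) • Xf k) ∧
    (∀ k : ℕ, vb Hfld (Xf k) = ((k : ℝ) + 1) • Xf k) := by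
  refine ⟨?_, ?_, ?_⟩
  · funext p
    rw [vb, (hasFDerivAt_Efld p).fderiv, (hasFDerivAt_Hfld p).fderiv]
    funext i
    fin_cases i <;> simp [diagCLM, Efld, Hfld]
  · intro k
    funext p
    rw [vb, (hasFDerivAt_Efld p).fderiv, (hasFDerivAt_Xf k p).fderiv]
    have h1 : ((k:ℝ)+1) ≠ 0 := by positivity
    have h2 : ((k:ℝ)+2) ≠ 0 := by positivity
    funext i
    fin_cases i <;> simp [diagCLM, Xd, Xf, Efld, mul_pow_pred] <;> (try field_simp) <;> (try rw [mul_pow_pred']) <;> ring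
  · intro k
    funext p
    rw [vb, (hasFDerivAt_Hfld p).fderiv, (hasFDerivAt_Xf k p).fderiv]
    have h1 : ((k:ℝ)+1) ≠ 0 := by positivity
    have h2 : ((k:ℝ)+2) ≠ 0 := by positivity
    funext i
    fin_cases i <;> simp [diagCLM, Xd, Xf, Hfld, mul_pow_pred] <;> (try field_simp) <;> (try rw [mul_pow_pred']) <;> ring
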